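/- arXiv:2108.03197 — 2 statements merged into one kernel-verified Lean document; each statement's English description precedes it below -/
import Mathlib

section
/- Uniqueness of the decomposition in Theorem 4.7: Let n ≥ 2 and let C ⊆ ℝ^n ∖ {0} be open and conic. Suppose Z, Z' : C → ℝ^n are smooth and positively 2-homogeneous, A, A' : C → ℝ^n are smooth and positively 0-homogeneous, and Z^k_{·i} + A_i y^k = Z'^k_{·i} + A'_i y^k on C for all indices i, k. Then Z = Z' and A = A'. (Hence a nonlinear connection of the form N^L + ∂̇Z + A⊗C determines the pair (Z, A) unequivocally.) -/
open scoped BigOperators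

noncomputable section

/-- Partial derivative `∂f/∂y^i`. -/
def pd {n : ℕ} (f : (Fin n → ℝ) → ℝ) (i : Fin n) : (Fin n → ℝ) → ℝ :=
  fun y => fderiv ℝ f y (Pi.single i 1)

/-- `C` is a conic set: stable under positive scalings. -/
def Conic {n : ℕ} (C : Set (Fin n → ℝ)) : Prop :=
  ∀ ⦃y⦄, y ∈ C → ∀ ⦃t : ℝ⦄, 0 < t → t • y ∈ C

/-- `f` is positively `α`-homogeneous on `C`. -/
def PosHom {n : ℕ} (α : ℝ) (C : Set (Fin n → ℝ)) (f : (Fin n → ℝ) → ℝ) : Prop :=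
  ∀ y ∈ C, ∀ t : ℝ, 0 < t → f (t • y) = t ^ α * f y

/-- Vector-valued positively `α`-homogeneous map on `C`. -/
def PosHomMap {n : ℕ} (α : ℝ) (C : Set (Fin n → ℝ)) (Z : (Fin n → ℝ) → Fin n → ℝ) : Prop :=
  ∀ y ∈ C, ∀ t : ℝ, 0 < t → Z (t • y) = t ^ α • Z y

/-!
Write `W = Z - Z'` and `B = A - A'`, so that `W^k_{·i} = -B_i y^k`. Euler's relation for the
2-homogeneous `W` gives `2 W^k = -(B ⬝ᵥ y) y^k`. Differentiating this identity in `y^k` and summing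
over `k`, Euler's relation for the 1-homogeneous `B ⬝ᵥ y` turns the left side into `-2 (B ⬝ᵥ y)`
and the right side into `-(n + 1) (B ⬝ᵥ y)`, so `B ⬝ᵥ y = 0` as soon as `n ≠ 1`. Then `W = 0`,
hence `B_i y^k = 0` for all `i, k`, and some `y^k` is nonzero.
-/

theorem fderiv_apply_self_of_homogeneous {E F : Type*} [NormedAddCommGroup E] [NormedSpace ℝ E]
    [NormedAddCommGroup F] [NormedSpace ℝ F] {f : E → F} {y : E} {α : ℝ}
    (hf : DifferentiableAt ℝ f y) (hhom : ∀ t : ℝ, 0 < t → f (t • y) = t ^ α • f y) :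
    fderiv ℝ f y y = α • f y := by
  have hray : HasDerivAt (fun t : ℝ => f (t • y)) (fderiv ℝ f y y) 1 := by
    have hline : HasDerivAt (fun t : ℝ => t • y) y 1 := by
      simpa using (hasDerivAt_id (1 : ℝ)).smul_const y
    exact hf.hasFDerivAt.comp_hasDerivAt_of_eq 1 hline (one_smul ℝ y).symm
  have hpow : HasDerivAt (fun t : ℝ => t ^ α • f y) (α • f y) 1 := by
    simpa using (Real.hasDerivAt_rpow_const (x := 1) (p := α) (Or.inl one_ne_zero)).smul_const (f y)
  have hev : (fun t : ℝ => f (t • y)) =ᶠ[nhds 1] fun t => t ^ α • f y :=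
    Filter.eventually_of_mem (Ioi_mem_nhds one_pos) hhom
  exact (hray.congr_of_eventuallyEq hev.symm).unique hpow

theorem fderiv_apply_eq_sum_mul_pd {n : ℕ} (f : (Fin n → ℝ) → ℝ) (y v : Fin n → ℝ) :
    fderiv ℝ f y v = ∑ i, v i * pd f i y := by
  conv_lhs => rw [← Finset.univ_sum_single v]
  refine (map_sum _ _ _).trans (Finset.sum_congr rfl fun i _ => ?_)
  rw [pd, ← smul_eq_mul, ← map_smul, ← Pi.single_smul', smul_eq_mul, mul_one]

section PartialDerivatives

variable {n : ℕ} {f g : (Fin n → ℝ) → ℝ} {y : Fin n → ℝ}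

theorem pd_sub (hf : DifferentiableAt ℝ f y) (hg : DifferentiableAt ℝ g y) (i : Fin n) :
    pd (fun z => f z - g z) i y = pd f i y - pd g i y := by
  simp only [pd, fderiv_fun_sub hf hg, sub_apply]

theorem pd_const_mul (c : ℝ) (f : (Fin n → ℝ) → ℝ) (i : Fin n) (y : Fin n → ℝ) :
    pd (fun z => c * f z) i y = c * pd f i y :=
  DFunLike.congr_fun (congrFun (fderiv_const_smul_field c) y) (Pi.single i 1)

theorem Filter.EventuallyEq.pd_eq (h : f =ᶠ[nhds y] g) (i : Fin n) : pd f i y = pd g i y := by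
  simp only [pd, h.fderiv_eq]

theorem pd_mul_apply_self (hg : DifferentiableAt ℝ g y) (i : Fin n) :
    pd (fun z => g z * z i) i y = g y + y i * pd g i y := by
  have hprod := hg.hasFDerivAt.fun_mul (hasFDerivAt_apply i y)
  simp [pd, hprod.fderiv]

theorem sum_pd_mul_apply_self (hg : DifferentiableAt ℝ g y) :
    ∑ i, pd (fun z => g z * z i) i y = n * g y + ∑ i, y i * pd g i y := by
  simp [pd_mul_apply_self hg, Finset.sum_add_distrib]

theorem PosHom.sum_mul_pd_eq {α : ℝ} {C : Set (Fin n → ℝ)} (hf : PosHom α C f) (hy : y ∈ C)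
    (hfy : DifferentiableAt ℝ f y) : ∑ i, y i * pd f i y = α * f y := by
  rw [← fderiv_apply_eq_sum_mul_pd]
  exact fderiv_apply_self_of_homogeneous hfy (hf y hy)

end PartialDerivatives

section Homogeneity

variable {n : ℕ} {α : ℝ} {C : Set (Fin n → ℝ)} {Z Z' : (Fin n → ℝ) → Fin n → ℝ}

theorem PosHomMap.apply (hZ : PosHomMap α C Z) (k : Fin n) : PosHom α C (fun z => Z z k) :=
  fun y hy t ht => congrFun (hZ y hy t ht) k

theorem PosHomMap.sub (hZ : PosHomMap α C Z) (hZ' : PosHomMap α C Z') : PosHomMap α C (Z - Z') :=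
  fun y hy t ht => by simp only [Pi.sub_apply, hZ y hy t ht, hZ' y hy t ht, smul_sub]

theorem PosHomMap.dotProduct_self (hZ : PosHomMap α C Z) :
    PosHom (α + 1) C (fun z => Z z ⬝ᵥ z) := by
  intro y hy t ht
  dsimp only
  rw [hZ y hy t ht, smul_dotProduct, dotProduct_smul, smul_eq_mul, smul_eq_mul,
    Real.rpow_add_one ht.ne']
  ring

end Homogeneity

theorem DifferentiableOn.differentiableAt_apply {n : ℕ} {U : Set (Fin n → ℝ)}
    {Z : (Fin n → ℝ) → Fin n → ℝ} (hZ : DifferentiableOn ℝ Z U) (hU : IsOpen U)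
    {y : Fin n → ℝ} (hy : y ∈ U) (k : Fin n) : DifferentiableAt ℝ (fun z => Z z k) y :=
  differentiableAt_pi.mp (hZ.differentiableAt (hU.mem_nhds hy)) k

section Decomposition

variable {n : ℕ} {U : Set (Fin n → ℝ)} {W B : (Fin n → ℝ) → Fin n → ℝ}

theorem two_mul_apply_eq_of_pd_eq_neg_mul (hU : IsOpen U) (hW : DifferentiableOn ℝ W U)
    (hWhom : PosHomMap 2 U W) (hpd : ∀ y ∈ U, ∀ i k, pd (fun z => W z k) i y = -(B y i * y k))
    {y : Fin n → ℝ} (hy : y ∈ U) (k : Fin n) : 2 * W y k = -(B y ⬝ᵥ y * y k) := by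
  rw [← (hWhom.apply k).sum_mul_pd_eq hy (hW.differentiableAt_apply hU hy k), dotProduct,
    Finset.sum_mul, ← Finset.sum_neg_distrib]
  exact Finset.sum_congr rfl fun i _ => by rw [hpd y hy]; ring

theorem dotProduct_self_eq_zero_of_pd_eq_neg_mul (hn : 2 ≤ n) (hU : IsOpen U)
    (hW : DifferentiableOn ℝ W U) (hWhom : PosHomMap 2 U W)
    (hB : DifferentiableOn ℝ B U) (hBhom : PosHomMap 0 U B)
    (hpd : ∀ y ∈ U, ∀ i k, pd (fun z => W z k) i y = -(B y i * y k))
    {y : Fin n → ℝ} (hy : y ∈ U) : B y ⬝ᵥ y = 0 := by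
  set g := fun z => B z ⬝ᵥ z with hg_def
  have hg : DifferentiableAt ℝ g y :=
    DifferentiableAt.fun_sum fun i _ =>
      (hB.differentiableAt_apply hU hy i).mul (differentiableAt_apply i y)
  have heuler : ∑ i, y i * pd g i y = g y := by
    simpa using hBhom.dotProduct_self.sum_mul_pd_eq hy hg
  have hdiv : ∑ i, pd (fun z => g z * z i) i y = 2 * g y := by
    calc ∑ i, pd (fun z => g z * z i) i y = ∑ i, pd (fun z => -2 * W z i) i y := by
          refine Finset.sum_congr rfl fun i _ => Filter.EventuallyEq.pd_eq ?_ i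
          filter_upwards [hU.mem_nhds hy] with z hz
          linarith [two_mul_apply_eq_of_pd_eq_neg_mul hU hW hWhom hpd hz i]
      _ = 2 * g y := by
          simp only [pd_const_mul, hpd y hy, hg_def, dotProduct, Finset.mul_sum]
          exact Finset.sum_congr rfl fun i _ => by ring
  rw [sum_pd_mul_apply_self hg, heuler] at hdiv
  have hn' : (n : ℝ) - 1 ≠ 0 := by
    have : (2 : ℝ) ≤ n := by exact_mod_cast hn
    linarith
  exact (mul_eq_zero.mp (by linarith : ((n : ℝ) - 1) * g y = 0)).resolve_left hn'

theorem eq_zero_of_pd_eq_neg_mul (hn : 2 ≤ n) (hU : IsOpen U)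
    (hW : DifferentiableOn ℝ W U) (hWhom : PosHomMap 2 U W)
    (hB : DifferentiableOn ℝ B U) (hBhom : PosHomMap 0 U B)
    (hpd : ∀ y ∈ U, ∀ i k, pd (fun z => W z k) i y = -(B y i * y k))
    {y : Fin n → ℝ} (hy : y ∈ U) (hy0 : y ≠ 0) : W y = 0 ∧ B y = 0 := by
  have hW0 : ∀ z ∈ U, W z = 0 := fun z hz => funext fun k => by
    have := two_mul_apply_eq_of_pd_eq_neg_mul hU hW hWhom hpd hz k
    rw [dotProduct_self_eq_zero_of_pd_eq_neg_mul hn hU hW hWhom hB hBhom hpd hz] at this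
    simpa using this
  obtain ⟨k, hk⟩ : ∃ k, y k ≠ 0 := Function.ne_iff.mp hy0
  refine ⟨hW0 y hy, funext fun i => ?_⟩
  have hpd0 : pd (fun z => W z k) i y = 0 := by
    have hloc : (fun z => W z k) =ᶠ[nhds y] fun _ => 0 :=
      Filter.eventually_of_mem (hU.mem_nhds hy) fun z hz => congrFun (hW0 z hz) k
    rw [hloc.pd_eq]
    simp [pd]
  rw [hpd y hy, neg_eq_zero] at hpd0
  exact (mul_eq_zero.mp hpd0).resolve_right hk

end Decomposition

theorem decomposition_uniqueness_general
    {n : ℕ} (hn : 2 ≤ n) (C : Set (Fin n → ℝ)) (hCopen : IsOpen C)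
    (hCnz : ∀ y ∈ C, y ≠ 0)
    (Z Z' A A' : (Fin n → ℝ) → Fin n → ℝ)
    (hZsmooth : ContDiffOn ℝ (⊤ : ℕ∞) Z C) (hZhom : PosHomMap 2 C Z)
    (hZ'smooth : ContDiffOn ℝ (⊤ : ℕ∞) Z' C) (hZ'hom : PosHomMap 2 C Z')
    (hAsmooth : ContDiffOn ℝ (⊤ : ℕ∞) A C) (hAhom : PosHomMap 0 C A)
    (hA'smooth : ContDiffOn ℝ (⊤ : ℕ∞) A' C) (hA'hom : PosHomMap 0 C A')
    (heq : ∀ y ∈ C, ∀ i k,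
      pd (fun z => Z z k) i y + A y i * y k = pd (fun z => Z' z k) i y + A' y i * y k) :
    ∀ y ∈ C, Z y = Z' y ∧ A y = A' y := by
  have hZ := hZsmooth.differentiableOn (by simp)
  have hZ' := hZ'smooth.differentiableOn (by simp)
  have hpd : ∀ y ∈ C, ∀ i k, pd (fun z => (Z - Z') z k) i y = -((A - A') y i * y k) := by
    intro y hy i k
    change pd (fun z => Z z k - Z' z k) i y = -((A y i - A' y i) * y k)
    rw [pd_sub (hZ.differentiableAt_apply hCopen hy k) (hZ'.differentiableAt_apply hCopen hy k)]
    linarith [heq y hy i k]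
  intro y hy
  obtain ⟨hZy, hAy⟩ := eq_zero_of_pd_eq_neg_mul hn hCopen (hZ.sub hZ') (hZhom.sub hZ'hom)
    ((hAsmooth.differentiableOn (by simp)).sub (hA'smooth.differentiableOn (by simp)))
    (hAhom.sub hA'hom) hpd hy (hCnz y hy)
  exact ⟨sub_eq_zero.mp hZy, sub_eq_zero.mp hAy⟩

/-- **Uniqueness of the decomposition in Theorem 4.7.** If `Z, Z'` are smooth positively
2-homogeneous and `A, A'` are smooth positively 0-homogeneous on the open conic
`C ⊆ ℝ^n ∖ {0}`, and `Z^k_{·i} + A_i y^k = Z'^k_{·i} + A'_i y^k` on `C`, then `Z = Z'` and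
`A = A'` on `C`. -/
theorem decomposition_uniqueness
    {n : ℕ} (hn : 2 ≤ n) (C : Set (Fin n → ℝ)) (hCopen : IsOpen C)
    (hCnz : ∀ y ∈ C, y ≠ 0) (hCconic : Conic C)
    (Z Z' A A' : (Fin n → ℝ) → Fin n → ℝ)
    (hZsmooth : ContDiffOn ℝ (⊤ : ℕ∞) Z C) (hZhom : PosHomMap 2 C Z)
    (hZ'smooth : ContDiffOn ℝ (⊤ : ℕ∞) Z' C) (hZ'hom : PosHomMap 2 C Z')
    (hAsmooth : ContDiffOn ℝ (⊤ : ℕ∞) A C) (hAhom : PosHomMap 0 C A)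
    (hA'smooth : ContDiffOn ℝ (⊤ : ℕ∞) A' C) (hA'hom : PosHomMap 0 C A')
    (heq : ∀ y ∈ C, ∀ i k,
      pd (fun z => Z z k) i y + A y i * y k = pd (fun z => Z' z k) i y + A' y i * y k) :
    ∀ y ∈ C, Z y = Z' y ∧ A y = A' y :=
  decomposition_uniqueness_general hn C hCopen hCnz Z Z' A A' hZsmooth hZhom hZ'smooth hZ'hom
    hAsmooth hAhom hA'smooth hA'hom heq
end
end

section
/- Key step of Cor. 4.12(ii): Let (C, L) be a fiberwise pseudo-Finsler datum on ℝ^n (n ≥ 2). Suppose Z, Z₀ : C → ℝ^n are smooth and positively 2-homogeneous, both satisfying on C the constraint (n+2)(y_a Z^a / L) − 2 C_a Z^a − Z^a_{·a} = 0 (respectively with Z₀ in place of Z), and suppose Z = Z₀ + ϱ · y for some smooth positively 1-homogeneous function ϱ : C → ℝ. Then ϱ = 0, hence Z = Z₀. (Consequently, two symmetric solutions of the affine equation whose Berwald connections share pregeodesics must coincide.) -/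
open scoped BigOperators

noncomputable section

/-- Fundamental tensor `g_ij(y) = (1/2) L_{·i·j}(y)`. -/
def gmet {n : ℕ} (L : (Fin n → ℝ) → ℝ) (y : Fin n → ℝ) : Matrix (Fin n) (Fin n) ℝ :=
  Matrix.of fun i j => (1 / 2) * pd (pd L i) j y

/-- Inverse fundamental tensor `g^{ij}`. -/
def ginv {n : ℕ} (L : (Fin n → ℝ) → ℝ) (y : Fin n → ℝ) : Matrix (Fin n) (Fin n) ℝ :=
  (gmet L y)⁻¹

/-- Lowered index `y_i = g_{ia} y^a`. -/
def yLow {n : ℕ} (L : (Fin n → ℝ) → ℝ) (y : Fin n → ℝ) (i : Fin n) : ℝ :=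
  ∑ a, gmet L y i a * y a

/-- Cartan tensor `C_{ijk} = (1/2) g_{ij·k}`. -/
def cartan {n : ℕ} (L : (Fin n → ℝ) → ℝ) (i j k : Fin n) : (Fin n → ℝ) → ℝ :=
  fun y => (1 / 2) * pd (fun z => gmet L z i j) k y

/-- Mean Cartan tensor `C_i = g^{ab} C_{abi}`. -/
def meanCartan {n : ℕ} (L : (Fin n → ℝ) → ℝ) (i : Fin n) : (Fin n → ℝ) → ℝ :=
  fun y => ∑ a, ∑ b, ginv L y a b * cartan L a b i y

/-- A fiberwise pseudo-Finsler datum on `ℝ^n`. -/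
structure FinslerDatum (n : ℕ) (C : Set (Fin n → ℝ)) (L : (Fin n → ℝ) → ℝ) : Prop where
  openC : IsOpen C
  nzC : ∀ y ∈ C, y ≠ 0
  conicC : Conic C
  smoothL : ContDiffOn ℝ (⊤ : ℕ∞) L C
  homL : PosHom 2 C L
  LneC : ∀ y ∈ C, L y ≠ 0
  gInvC : ∀ y ∈ C, IsUnit (gmet L y).det

/-- Closure of `C` inside `ℝ^n ∖ {0}`. -/
def clos {n : ℕ} (C : Set (Fin n → ℝ)) : Set (Fin n → ℝ) := closure C \ {0}

/-- A proper fiberwise datum on `ℝ^n`. -/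
structure ProperDatum (n : ℕ) (C U : Set (Fin n → ℝ)) (L : (Fin n → ℝ) → ℝ) : Prop where
  connC : IsConnected C
  openC : IsOpen C
  conicC : Conic C
  nzC : ∀ y ∈ C, y ≠ 0
  openU : IsOpen U
  conicU : Conic U
  nzU : ∀ y ∈ U, y ≠ 0
  closSub : clos C ⊆ U
  smoothL : ContDiffOn ℝ (⊤ : ℕ∞) L U
  homL : PosHom 2 U L
  posC : ∀ y ∈ C, 0 < L y
  zeroBd : ∀ y ∈ clos C \ C, L y = 0
  gInvU : ∀ y ∈ U, IsUnit (gmet L y).det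

/-- Lorentzian signature `(+,−,…,−)` of a symmetric matrix, via Sylvester normal form. -/
def LorentzSignature {n : ℕ} (g : Matrix (Fin n) (Fin n) ℝ) : Prop :=
  ∃ P : Matrix (Fin n) (Fin n) ℝ, IsUnit P.det ∧
    P.transpose * g * P = Matrix.diagonal (fun i : Fin n => if (i : ℕ) = 0 then (1 : ℝ) else -1)

/-- A properly Lorentz fiberwise datum on `ℝ^n`. -/
structure LorentzDatum (n : ℕ) (C U : Set (Fin n → ℝ)) (L : (Fin n → ℝ) → ℝ)
    extends ProperDatum n C U L : Prop where
  lorentz : ∀ y ∈ clos C, LorentzSignature (gmet L y)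
  halfspace : ∃ φ : (Fin n → ℝ) →ₗ[ℝ] ℝ, φ ≠ 0 ∧ ∀ v ∈ clos C, 0 < φ v

/-- `σ^Z = y_a Z^a / L`. -/
def sigmaZ {n : ℕ} (L : (Fin n → ℝ) → ℝ) (Z : (Fin n → ℝ) → Fin n → ℝ) :
    (Fin n → ℝ) → ℝ :=
  fun y => (∑ a, yLow L y a * Z y a) / L y

/-- `K^Z_i = −(2/(n+2)) (2 C_{a·i} Z^a + C_a Z^a_{·i})`. -/
def Kten {n : ℕ} (L : (Fin n → ℝ) → ℝ) (Z : (Fin n → ℝ) → Fin n → ℝ) (i : Fin n) :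
    (Fin n → ℝ) → ℝ :=
  fun y => -(2 / ((n : ℝ) + 2)) *
    (2 * ∑ a, pd (meanCartan L a) i y * Z y a + ∑ a, meanCartan L a y * pd (fun z => Z z a) i y)

/-!
Substitute `Z = Z₀ + ϱ y` into the constraint for `Z` and subtract the constraint for `Z₀`.
By Euler's theorem `y_a y^a = L` (as `L` is 2-homogeneous) and `C_a y^a = 0` (as `g` is
0-homogeneous), while the divergence of `ϱ y` is `y^a ϱ_{·a} + n ϱ = (n + 1) ϱ`.
What is left of the difference is `(n + 2) ϱ - (n + 1) ϱ = ϱ`, which must therefore vanish.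
-/

open Filter Topology

variable {n : ℕ} {C : Set (Fin n → ℝ)}

lemma fderiv_apply_eq_sum_pd (f : (Fin n → ℝ) → ℝ) (y v : Fin n → ℝ) :
    fderiv ℝ f y v = ∑ a, pd f a y * v a := by
  conv_lhs => rw [← Finset.univ_sum_single v]
  simp only [map_sum, pd]
  refine Finset.sum_congr rfl fun a _ => ?_
  rw [show Pi.single a (v a) = v a • (Pi.single a 1 : Fin n → ℝ) by simp [← Pi.single_smul],
    map_smul, smul_eq_mul, mul_comm]

lemma contDiffOn_pd {f : (Fin n → ℝ) → ℝ} (hC : IsOpen C) (hf : ContDiffOn ℝ (⊤ : ℕ∞) f C)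
    (i : Fin n) : ContDiffOn ℝ (⊤ : ℕ∞) (pd f i) C :=
  (ContinuousLinearMap.apply ℝ ℝ (Pi.single i 1 : Fin n → ℝ)).contDiff.comp_contDiffOn
    ((contDiffOn_infty_iff_fderiv_of_isOpen hC).mp hf).2

namespace PosHom

variable {α : ℝ} {f : (Fin n → ℝ) → ℝ}

theorem fderiv_apply_self (hf : PosHom α C f) {y : Fin n → ℝ} (hy : y ∈ C)
    (hd : DifferentiableAt ℝ f y) : fderiv ℝ f y y = α * f y := by
  have hchain : HasDerivAt (fun t : ℝ => f (t • y)) (fderiv ℝ f y y) 1 := by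
    have hline : HasDerivAt (fun t : ℝ => t • y) y 1 := by
      simpa using (hasDerivAt_id (1 : ℝ)).smul_const y
    have hd' : HasFDerivAt f (fderiv ℝ f y) ((1 : ℝ) • y) := by
      rw [one_smul]; exact hd.hasFDerivAt
    exact hd'.comp_hasDerivAt 1 hline
  have hpow : HasDerivAt (fun t : ℝ => t ^ α * f y) (α * f y) 1 := by
    simpa using ((Real.hasDerivAt_rpow_const (Or.inl one_ne_zero)).mul_const (f y))
  refine hchain.unique (hpow.congr_of_eventuallyEq ?_)
  filter_upwards [Ioi_mem_nhds one_pos] with t ht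
  exact hf y hy t ht

theorem sum_pd_mul_self (hf : PosHom α C f) {y : Fin n → ℝ} (hy : y ∈ C)
    (hd : DifferentiableAt ℝ f y) : ∑ a, pd f a y * y a = α * f y := by
  rw [← fderiv_apply_eq_sum_pd, hf.fderiv_apply_self hy hd]

theorem pd (hC : IsOpen C) (hcon : Conic C) (hf : PosHom α C f)
    (hdf : DifferentiableOn ℝ f C) (i : Fin n) : PosHom (α - 1) C (_root_.pd f i) := by
  intro y hy t ht
  have hdiff : ∀ x ∈ C, DifferentiableAt ℝ f x := fun x hx =>
    hdf.differentiableAt (hC.mem_nhds hx)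
  have hchain : HasFDerivAt (fun x => f (t • x))
      ((fderiv ℝ f (t • y)).comp (t • ContinuousLinearMap.id ℝ (Fin n → ℝ))) y :=
    (hdiff _ (hcon hy ht)).hasFDerivAt.comp y
      ((ContinuousLinearMap.id ℝ (Fin n → ℝ)).hasFDerivAt.const_smul t)
  have hscaled : HasFDerivAt (fun x => f (t • x)) (t ^ α • fderiv ℝ f y) y := by
    refine ((hdiff y hy).hasFDerivAt.const_smul (t ^ α)).congr_of_eventuallyEq ?_
    filter_upwards [hC.mem_nhds hy] with x hx
    exact hf x hx t ht
  have h := congrArg (fun φ : (Fin n → ℝ) →L[ℝ] ℝ => φ (Pi.single i 1)) (hchain.unique hscaled)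
  simp only [ContinuousLinearMap.coe_comp, Function.comp_apply, FunLike.coe_smul,
    Pi.smul_apply, ContinuousLinearMap.coe_id', id_eq, map_smul, smul_eq_mul] at h
  rw [_root_.pd, _root_.pd, Real.rpow_sub ht, Real.rpow_one]
  field_simp
  linarith

end PosHom

namespace FinslerDatum

variable {L : (Fin n → ℝ) → ℝ}

lemma contDiffOn_pd_L (hD : FinslerDatum n C L) (i : Fin n) :
    ContDiffOn ℝ (⊤ : ℕ∞) (pd L i) C :=
  contDiffOn_pd hD.openC hD.smoothL i

lemma posHom_pd_L (hD : FinslerDatum n C L) (i : Fin n) : PosHom 1 C (pd L i) := by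
  convert hD.homL.pd hD.openC hD.conicC (hD.smoothL.differentiableOn (by simp)) i using 1
  norm_num

lemma contDiffOn_gmet (hD : FinslerDatum n C L) (i j : Fin n) :
    ContDiffOn ℝ (⊤ : ℕ∞) (fun z => gmet L z i j) C :=
  contDiffOn_const.mul (contDiffOn_pd hD.openC (hD.contDiffOn_pd_L i) j)

lemma posHom_gmet (hD : FinslerDatum n C L) (i j : Fin n) :
    PosHom 0 C (fun z => gmet L z i j) := by
  intro y hy t ht
  have h := (hD.posHom_pd_L i).pd hD.openC hD.conicC
    ((hD.contDiffOn_pd_L i).differentiableOn (by simp)) j y hy t ht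
  simp only [gmet, Matrix.of_apply, h, sub_self, Real.rpow_zero]
  ring

lemma sum_yLow_mul_self (hD : FinslerDatum n C L) {y : Fin n → ℝ} (hy : y ∈ C) :
    ∑ a, yLow L y a * y a = L y := by
  have hdiff : ∀ f : (Fin n → ℝ) → ℝ, ContDiffOn ℝ (⊤ : ℕ∞) f C → DifferentiableAt ℝ f y :=
    fun f hf => (hf.differentiableOn (by simp)).differentiableAt (hD.openC.mem_nhds hy)
  have hyLow : ∀ a, yLow L y a = (1 / 2) * pd L a y := fun a => by
    rw [← one_mul (pd L a y), ← (hD.posHom_pd_L a).sum_pd_mul_self hy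
      (hdiff _ (hD.contDiffOn_pd_L a)), Finset.mul_sum]
    simp only [yLow, gmet, Matrix.of_apply, mul_assoc]
  simp only [hyLow, mul_assoc, ← Finset.mul_sum, hD.homL.sum_pd_mul_self hy (hdiff L hD.smoothL)]
  ring

lemma sum_meanCartan_mul_self (hD : FinslerDatum n C L) {y : Fin n → ℝ} (hy : y ∈ C) :
    ∑ a, meanCartan L a y * y a = 0 := by
  have hg : ∀ a b, ∑ i, pd (fun z => gmet L z a b) i y * y i = 0 := fun a b => by
    rw [(hD.posHom_gmet a b).sum_pd_mul_self hy
      (((hD.contDiffOn_gmet a b).differentiableOn (by simp)).differentiableAt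
        (hD.openC.mem_nhds hy)), zero_mul]
  simp only [meanCartan, cartan, Finset.sum_mul]
  rw [Finset.sum_comm]
  refine Finset.sum_eq_zero fun a _ => ?_
  rw [Finset.sum_comm]
  refine Finset.sum_eq_zero fun b _ => ?_
  simp only [mul_assoc, ← Finset.mul_sum, hg, mul_zero]

end FinslerDatum

lemma sum_pd_coord_of_eq_add_smul {Z Z₀ : (Fin n → ℝ) → Fin n → ℝ} {ϱ : (Fin n → ℝ) → ℝ}
    {y : Fin n → ℝ} (hrel : ∀ᶠ z in 𝓝 y, Z z = Z₀ z + ϱ z • z)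
    (hZ₀ : DifferentiableAt ℝ Z₀ y) (hϱ : DifferentiableAt ℝ ϱ y) :
    ∑ a, pd (fun z => Z z a) a y
      = ∑ a, pd (fun z => Z₀ z a) a y + fderiv ℝ ϱ y y + n * ϱ y := by
  have hcoord : ∀ a, pd (fun z => Z z a) a y
      = pd (fun z => Z₀ z a) a y + pd ϱ a y * y a + ϱ y := fun a => by
    have hZa : (fun z => Z z a) =ᶠ[𝓝 y] fun z => Z₀ z a + ϱ z * z a := by
      filter_upwards [hrel] with z hz
      simp [hz]
    simp only [pd, hZa.fderiv_eq]
    rw [fderiv_fun_add (differentiableAt_pi.mp hZ₀ a) (hϱ.fun_mul (differentiableAt_apply a y)),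
      fderiv_fun_mul hϱ (differentiableAt_apply a y), (hasFDerivAt_apply a y).fderiv]
    simp
    ring
  simp only [hcoord, Finset.sum_add_distrib, fderiv_apply_eq_sum_pd ϱ y y]
  simp

lemma sum_mul_add_smul (w u y : Fin n → ℝ) (r : ℝ) :
    ∑ a, w a * (u + r • y) a = ∑ a, w a * u a + r * ∑ a, w a * y a := by
  rw [Finset.mul_sum, ← Finset.sum_add_distrib]
  refine Finset.sum_congr rfl fun a _ => ?_
  simp only [Pi.add_apply, Pi.smul_apply, smul_eq_mul]
  ring

theorem same_fiber_from_shared_pregeodesics_general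
    {n : ℕ} (C : Set (Fin n → ℝ)) (L : (Fin n → ℝ) → ℝ)
    (hD : FinslerDatum n C L)
    (Z Z₀ : (Fin n → ℝ) → Fin n → ℝ)
    (hZ₀smooth : ContDiffOn ℝ (⊤ : ℕ∞) Z₀ C)
    (hZeq : ∀ y ∈ C,
      ((n : ℝ) + 2) * ((∑ a, yLow L y a * Z y a) / L y)
        - 2 * ∑ a, meanCartan L a y * Z y a - ∑ a, pd (fun z => Z z a) a y = 0)
    (hZ₀eq : ∀ y ∈ C,
      ((n : ℝ) + 2) * ((∑ a, yLow L y a * Z₀ y a) / L y)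
        - 2 * ∑ a, meanCartan L a y * Z₀ y a - ∑ a, pd (fun z => Z₀ z a) a y = 0)
    (ϱ : (Fin n → ℝ) → ℝ)
    (hϱsmooth : ContDiffOn ℝ (⊤ : ℕ∞) ϱ C) (hϱhom : PosHom 1 C ϱ)
    (hrel : ∀ y ∈ C, Z y = Z₀ y + ϱ y • y) :
    ∀ y ∈ C, ϱ y = 0 ∧ Z y = Z₀ y := by
  intro y hy
  have hnhds : C ∈ 𝓝 y := hD.openC.mem_nhds hy
  have hϱd := (hϱsmooth.differentiableOn (by simp)).differentiableAt hnhds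
  have hdiv := sum_pd_coord_of_eq_add_smul (eventually_of_mem hnhds hrel)
    ((hZ₀smooth.differentiableOn (by simp)).differentiableAt hnhds) hϱd
  rw [hϱhom.fderiv_apply_self hy hϱd] at hdiv
  have hϱ0 : ϱ y = 0 := by
    have h := hZeq y hy
    -- `rw` cannot reach `Z` under the binder of the divergence term; `hdiv` rewrites that one
    rw [hrel y hy, sum_mul_add_smul, sum_mul_add_smul, hD.sum_yLow_mul_self hy,
      hD.sum_meanCartan_mul_self hy, hdiv, add_div,
      mul_div_cancel_right₀ _ (hD.LneC y hy)] at h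
    linear_combination h - hZ₀eq y hy
  exact ⟨hϱ0, by simp [hrel y hy, hϱ0]⟩

/-- **Key step of Cor. 4.12(ii).** If `Z` and `Z₀` are smooth positively 2-homogeneous maps
both satisfying the constraint `(n+2)(y_a Z^a / L) − 2 C_a Z^a − Z^a_{·a} = 0` on `C`, and
`Z = Z₀ + ϱ·y` for a smooth positively 1-homogeneous `ϱ`, then `ϱ = 0` and `Z = Z₀`. -/
theorem same_fiber_from_shared_pregeodesics
    {n : ℕ} (hn : 2 ≤ n) (C : Set (Fin n → ℝ)) (L : (Fin n → ℝ) → ℝ)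
    (hD : FinslerDatum n C L)
    (Z Z₀ : (Fin n → ℝ) → Fin n → ℝ)
    (hZsmooth : ContDiffOn ℝ (⊤ : ℕ∞) Z C) (hZhom : PosHomMap 2 C Z)
    (hZ₀smooth : ContDiffOn ℝ (⊤ : ℕ∞) Z₀ C) (hZ₀hom : PosHomMap 2 C Z₀)
    (hZeq : ∀ y ∈ C,
      ((n : ℝ) + 2) * ((∑ a, yLow L y a * Z y a) / L y)
        - 2 * ∑ a, meanCartan L a y * Z y a - ∑ a, pd (fun z => Z z a) a y = 0)
    (hZ₀eq : ∀ y ∈ C,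
      ((n : ℝ) + 2) * ((∑ a, yLow L y a * Z₀ y a) / L y)
        - 2 * ∑ a, meanCartan L a y * Z₀ y a - ∑ a, pd (fun z => Z₀ z a) a y = 0)
    (ϱ : (Fin n → ℝ) → ℝ)
    (hϱsmooth : ContDiffOn ℝ (⊤ : ℕ∞) ϱ C) (hϱhom : PosHom 1 C ϱ)
    (hrel : ∀ y ∈ C, Z y = Z₀ y + ϱ y • y) :
    ∀ y ∈ C, ϱ y = 0 ∧ Z y = Z₀ y :=
  same_fiber_from_shared_pregeodesics_general C L hD Z Z₀ hZ₀smooth hZeq hZ₀eq ϱ hϱsmooth hϱhom hrel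
end
end
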